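/- arXiv:1910.11022 — 5 statements merged into one kernel-verified Lean document; each statement's English description precedes it below -/
import Mathlib

section
/- Let d ≥ 1, α ∈ (0,2) and ℓ ∈ (0, 1/√2]. There exists a constant C > 0, depending only on d, α and ℓ, such that for all x ∈ ℝ^d: ∫_{|z|≥ℓ} log(1 + |z|/(1+|x|)) |z|^{−d−α} dz ≤ C (1+|x|)^{−min(α,1)} (1 + 1_{α=1} · log(1+|x|)), where 1_{α=1} equals 1 if α = 1 and 0 otherwise. -/
/-!
In polar coordinates the integral becomes `∫_ℓ^∞ log (1 + r / R) r ^ (-1 - α) dr` times a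
dimensional constant, where `R = 1 + ‖x‖ ≥ 1`. On `[ℓ, R]` the bound `log (1 + t) ≤ t` leaves
`R⁻¹ ∫_ℓ^R r ^ (-α) dr`, which is `O(R ^ (-α))`, `O(R⁻¹ log R)` or `O(R⁻¹)` according as `α < 1`,
`α = 1` or `α > 1`. On `(R, ∞)` the bound `log (1 + t) ≤ (1 + 2 / α) t ^ (α / 2)` for `t ≥ 1` keeps
the integrand integrable and contributes `O(R ^ (-α))`.
-/

open MeasureTheory
open scoped ENNReal

noncomputable section

open Set Metric Module Real

theorem pow_sub_one_mul_rpow_neg_sub {n : ℕ} (hn : 1 ≤ n) {r : ℝ} (hr : 0 < r) (α : ℝ) :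
    r ^ (n - 1) * r ^ (-(n : ℝ) - α) = r ^ (-1 - α) := by
  rw [← rpow_natCast, Nat.cast_sub hn, ← rpow_add hr]
  ring_nf

namespace MeasureTheory

variable {E : Type*} [NormedAddCommGroup E] [NormedSpace ℝ E] [MeasurableSpace E] [BorelSpace E]
  [FiniteDimensional ℝ E] [Nontrivial E] (μ : Measure E) [μ.IsAddHaarMeasure]

theorem lintegral_fun_norm_addHaar {f : ℝ → ℝ≥0∞} (hf : Measurable f) :
    ∫⁻ x, f ‖x‖ ∂μ = finrank ℝ E * μ (ball 0 1) *
      ∫⁻ r in Ioi 0, ENNReal.ofReal (r ^ (finrank ℝ E - 1)) * f r :=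
  calc
    ∫⁻ x, f ‖x‖ ∂μ = ∫⁻ x : ({(0)}ᶜ : Set E), f ‖x.1‖ ∂(μ.comap (↑)) := by
      rw [lintegral_subtype_comap (measurableSet_singleton _).compl fun x ↦ f ‖x‖,
        restrict_compl_singleton]
    _ = ∫⁻ p, f p.2 ∂μ.toSphere.prod (.volumeIoiPow (finrank ℝ E - 1)) := by
      simpa using (μ.measurePreserving_homeomorphUnitSphereProd.lintegral_comp_emb
        (Homeomorph.measurableEmbedding _) (f ∘ Subtype.val ∘ Prod.snd))
    _ = μ.toSphere univ * ∫⁻ r, f r ∂.volumeIoiPow (finrank ℝ E - 1) := by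
      simpa only [one_mul, lintegral_const, Function.comp_apply, univ_inter, Measure.restrict_apply]
        using lintegral_prod_mul (μ := μ.toSphere) (f := fun _ ↦ 1) (g := f ∘ Subtype.val)
        aemeasurable_const (hf.comp measurable_subtype_coe).aemeasurable
    _ = _ := by
      rw [Measure.toSphere_apply_univ, Measure.volumeIoiPow,
        lintegral_withDensity_eq_lintegral_mul _ (by fun_prop)
          (g := fun r : Ioi (0:ℝ) ↦ f r) (hf.comp measurable_subtype_coe)]
      exact congrArg _ (lintegral_subtype_comap measurableSet_Ioi
        fun r ↦ ENNReal.ofReal (r ^ (finrank ℝ E - 1)) * f r)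

theorem setLIntegral_fun_norm_addHaar_Ici {ℓ : ℝ} (hℓ : 0 < ℓ) {f : ℝ → ℝ≥0∞} (hf : Measurable f) :
    ∫⁻ x in {x | ℓ ≤ ‖x‖}, f ‖x‖ ∂μ = finrank ℝ E * μ (ball 0 1) *
      ∫⁻ r in Ici ℓ, ENNReal.ofReal (r ^ (finrank ℝ E - 1)) * f r := by
  rw [show {x : E | ℓ ≤ ‖x‖} = (‖·‖) ⁻¹' Ici ℓ from rfl,
    ← lintegral_indicator (measurableSet_Ici.preimage measurable_norm)]
  change ∫⁻ x, (Ici ℓ).indicator f ‖x‖ ∂μ = _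
  rw [lintegral_fun_norm_addHaar μ (hf.indicator measurableSet_Ici)]
  simp_rw [← indicator_mul_right _ (fun r ↦ ENNReal.ofReal (r ^ (finrank ℝ E - 1))) f]
  rw [setLIntegral_indicator measurableSet_Ici,
    inter_eq_left.mpr (Ici_subset_Ioi.mpr hℓ)]

theorem setLIntegral_fun_norm_mul_rpow_addHaar_Ici {ℓ : ℝ} (hℓ : 0 < ℓ) (g : ℝ → ℝ)
    (hg : Measurable g) (α : ℝ) :
    ∫⁻ x in {x | ℓ ≤ ‖x‖}, ENNReal.ofReal (g ‖x‖ * ‖x‖ ^ (-(finrank ℝ E : ℝ) - α)) ∂μ =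
      finrank ℝ E * μ (ball 0 1) * ∫⁻ r in Ici ℓ, ENNReal.ofReal (g r * r ^ (-1 - α)) := by
  rw [setLIntegral_fun_norm_addHaar_Ici μ hℓ
    (f := fun r ↦ ENNReal.ofReal (g r * r ^ (-(finrank ℝ E : ℝ) - α))) (by fun_prop)]
  refine congrArg _ (setLIntegral_congr_fun measurableSet_Ici fun r (hr : ℓ ≤ r) ↦ ?_)
  have hr0 : 0 < r := hℓ.trans_le hr
  rw [← ENNReal.ofReal_mul (by positivity), mul_left_comm,
    pow_sub_one_mul_rpow_neg_sub finrank_pos hr0]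

end MeasureTheory

theorem log_one_add_le_mul_rpow {t ε : ℝ} (ht : 1 ≤ t) (hε : 0 < ε) :
    log (1 + t) ≤ (1 + ε⁻¹) * t ^ ε := by
  have h2t : log (1 + t) ≤ log 2 + log t := by
    rw [← log_mul two_ne_zero (by positivity)]
    exact log_le_log (by positivity) (by linarith)
  have hlog2 : log 2 ≤ t ^ ε := (log_two_lt_d9.le.trans (by norm_num)).trans (one_le_rpow ht hε.le)
  have hlogt : log t ≤ t ^ ε / ε := log_le_rpow_div (by positivity) hε
  calc log (1 + t) ≤ t ^ ε + t ^ ε / ε := by linarith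
    _ = (1 + ε⁻¹) * t ^ ε := by ring

theorem setLIntegral_ofReal_le_ofReal_setIntegral {X : Type*} [MeasurableSpace X] {μ : Measure X}
    {s : Set X} {f g : X → ℝ} (hs : MeasurableSet s) (hg : IntegrableOn g s μ)
    (hg0 : ∀ x ∈ s, 0 ≤ g x) (hfg : ∀ x ∈ s, f x ≤ g x) :
    ∫⁻ x in s, ENNReal.ofReal (f x) ∂μ ≤ ENNReal.ofReal (∫ x in s, g x ∂μ) := by
  rw [ofReal_integral_eq_lintegral_ofReal hg (ae_restrict_of_forall_mem hs hg0)]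
  exact setLIntegral_mono' hs fun x hx ↦ ENNReal.ofReal_le_ofReal (hfg x hx)

theorem setLIntegral_Icc_log_one_add_div_mul_rpow_le {α ℓ R : ℝ} (hℓ : 0 < ℓ) (hℓR : ℓ ≤ R) :
    ∫⁻ r in Icc ℓ R, ENNReal.ofReal (log (1 + r / R) * r ^ (-1 - α)) ≤
      ENNReal.ofReal (R⁻¹ * ∫ r in ℓ..R, r ^ (-α)) := by
  have hR : 0 < R := hℓ.trans_le hℓR
  rw [intervalIntegral.integral_of_le hℓR, ← integral_Icc_eq_integral_Ioc, ← integral_const_mul]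
  refine setLIntegral_ofReal_le_ofReal_setIntegral measurableSet_Icc ?_
    (fun r hr ↦ by have := hℓ.trans_le hr.1; positivity) fun r hr ↦ ?_
  · exact ((continuousOn_id.rpow_const fun r hr ↦ Or.inl (hℓ.trans_le hr.1).ne').const_smul
      R⁻¹).integrableOn_Icc
  · have hr0 : 0 < r := hℓ.trans_le hr.1
    calc log (1 + r / R) * r ^ (-1 - α) ≤ r / R * r ^ (-1 - α) := by
          gcongr
          linarith [log_le_sub_one_of_pos (show 0 < 1 + r / R by positivity)]
      _ = R⁻¹ * r ^ (-α) := by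
          rw [show -α = 1 + (-1 - α) by ring, rpow_add hr0, rpow_one]
          ring

theorem setLIntegral_Ioi_log_one_add_div_mul_rpow_le {α R : ℝ} (hα : 0 < α) (hR : 0 < R) :
    ∫⁻ r in Ioi R, ENNReal.ofReal (log (1 + r / R) * r ^ (-1 - α)) ≤
      ENNReal.ofReal ((1 + 2 / α) * (2 / α) * R ^ (-α)) := by
  have hint : ∫ r in Ioi R, (1 + 2 / α) * R ^ (-(α / 2)) * r ^ (-1 - α / 2) =
      (1 + 2 / α) * (2 / α) * R ^ (-α) := by
    rw [integral_const_mul, integral_Ioi_rpow_of_lt (by linarith) hR,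
      show -1 - α / 2 + 1 = -(α / 2) by ring, show -α = -(α / 2) + -(α / 2) by ring, rpow_add hR]
    field_simp
  rw [← hint]
  refine setLIntegral_ofReal_le_ofReal_setIntegral measurableSet_Ioi
    ((integrableOn_Ioi_rpow_of_lt (by linarith) hR).const_mul _)
    (fun r hr ↦ by have := hR.trans hr; positivity) fun r (hr : R < r) ↦ ?_
  have hr0 : 0 < r := hR.trans hr
  calc log (1 + r / R) * r ^ (-1 - α) ≤ (1 + (α / 2)⁻¹) * (r / R) ^ (α / 2) * r ^ (-1 - α) := by
        gcongr
        exact log_one_add_le_mul_rpow ((one_le_div hR).mpr hr.le) (by positivity)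
    _ = (1 + 2 / α) * R ^ (-(α / 2)) * r ^ (-1 - α / 2) := by
        rw [div_rpow hr0.le hR.le, rpow_neg hR.le, show -1 - α / 2 = α / 2 + (-1 - α) by ring,
          rpow_add hr0]
        field_simp

def logTailRate (α R : ℝ) : ℝ := R ^ (-min α 1) * (1 + if α = 1 then log R else 0)

theorem logTailRate_nonneg (α : ℝ) {R : ℝ} (hR : 1 ≤ R) : 0 ≤ logTailRate α R := by
  have := log_nonneg hR
  unfold logTailRate
  split_ifs <;> positivity

theorem rpow_neg_le_logTailRate (α : ℝ) {R : ℝ} (hR : 1 ≤ R) : R ^ (-α) ≤ logTailRate α R := by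
  have hlog := log_nonneg hR
  calc R ^ (-α) ≤ R ^ (-min α 1) := rpow_le_rpow_of_exponent_le hR (neg_le_neg (min_le_left _ _))
    _ ≤ logTailRate α R := by
        unfold logTailRate
        refine le_mul_of_one_le_right (by positivity) ?_
        split_ifs <;> linarith

theorem inv_mul_integral_rpow_neg_le_logTailRate {α ℓ : ℝ} (hℓ : 0 < ℓ) (hℓ1 : ℓ ≤ 1) :
    ∃ c > 0, ∀ R, 1 ≤ R → R⁻¹ * ∫ r in ℓ..R, r ^ (-α) ≤ c * logTailRate α R := by
  rcases lt_trichotomy α 1 with hα1 | rfl | hα1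
  · refine ⟨(1 - α)⁻¹, by simpa using hα1, fun R hR ↦ ?_⟩
    have hR0 : 0 < R := one_pos.trans_le hR
    rw [logTailRate, min_eq_left hα1.le, if_neg hα1.ne, add_zero, mul_one,
      integral_rpow (Or.inl (by linarith)), show -α + 1 = 1 - α by ring]
    calc R⁻¹ * ((R ^ (1 - α) - ℓ ^ (1 - α)) / (1 - α)) ≤ R⁻¹ * (R ^ (1 - α) / (1 - α)) := by
          have := rpow_nonneg hℓ.le (1 - α)
          gcongr
          linarith
      _ = (1 - α)⁻¹ * R ^ (-α) := by
          rw [show 1 - α = 1 + -α by ring, rpow_add hR0, rpow_one]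
          field_simp
  · refine ⟨1 - log ℓ, by linarith [log_nonpos hℓ.le hℓ1], fun R hR ↦ ?_⟩
    have hR0 : 0 < R := one_pos.trans_le hR
    have hlogR := log_nonneg hR
    have hlogℓ := log_nonpos hℓ.le hℓ1
    simp only [logTailRate, min_self, if_pos, rpow_neg_one]
    rw [integral_inv_of_pos hℓ hR0, log_div hR0.ne' hℓ.ne']
    calc R⁻¹ * (log R - log ℓ) ≤ R⁻¹ * ((1 - log ℓ) * (1 + log R)) := by
          gcongr
          nlinarith
      _ = (1 - log ℓ) * (R⁻¹ * (1 + log R)) := by ring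
  · refine ⟨ℓ ^ (1 - α) / (α - 1), by have := rpow_pos_of_pos hℓ (1 - α); bound, fun R hR ↦ ?_⟩
    have hR0 : 0 < R := one_pos.trans_le hR
    have h0 : (0 : ℝ) ∉ uIcc ℓ R := fun h ↦ by
      rw [uIcc_of_le (hℓ1.trans hR)] at h
      linarith [h.1]
    rw [logTailRate, min_eq_right hα1.le, if_neg hα1.ne', add_zero, mul_one, rpow_neg_one,
      integral_rpow (Or.inr ⟨by linarith, h0⟩), show -α + 1 = 1 - α by ring]
    calc R⁻¹ * ((R ^ (1 - α) - ℓ ^ (1 - α)) / (1 - α))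
        = R⁻¹ * ((ℓ ^ (1 - α) - R ^ (1 - α)) / (α - 1)) := by
          rw [← neg_sub, ← neg_sub α, neg_div_neg_eq]
      _ ≤ R⁻¹ * (ℓ ^ (1 - α) / (α - 1)) := by
          have := rpow_nonneg hR0.le (1 - α)
          gcongr
          linarith
      _ = ℓ ^ (1 - α) / (α - 1) * R⁻¹ := mul_comm _ _

theorem setLIntegral_Ici_log_one_add_div_mul_rpow_le {α ℓ : ℝ} (hα : 0 < α) (hℓ : 0 < ℓ)
    (hℓ1 : ℓ ≤ 1) :
    ∃ C > 0, ∀ R, 1 ≤ R → ∫⁻ r in Ici ℓ, ENNReal.ofReal (log (1 + r / R) * r ^ (-1 - α)) ≤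
      ENNReal.ofReal (C * logTailRate α R) := by
  obtain ⟨c, hc, hnear⟩ := inv_mul_integral_rpow_neg_le_logTailRate hℓ hℓ1
  refine ⟨c + (1 + 2 / α) * (2 / α), by positivity, fun R hR ↦ ?_⟩
  have hℓR : ℓ ≤ R := hℓ1.trans hR
  have hrate := logTailRate_nonneg α hR
  rw [← Icc_union_Ioi_eq_Ici hℓR, add_mul, ENNReal.ofReal_add (by positivity) (by positivity)]
  refine (lintegral_union_le _ _ _).trans (add_le_add ?_ ?_)
  · exact (setLIntegral_Icc_log_one_add_div_mul_rpow_le hℓ hℓR).trans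
      (ENNReal.ofReal_le_ofReal (hnear R hR))
  · refine (setLIntegral_Ioi_log_one_add_div_mul_rpow_le hα (one_pos.trans_le hR)).trans
      (ENNReal.ofReal_le_ofReal ?_)
    exact mul_le_mul_of_nonneg_left (rpow_neg_le_logTailRate α hR) (by positivity)

theorem stable_log_tail_integral_bound_general (d : ℕ) (hd : 1 ≤ d) (α ℓ : ℝ)
    (hα : 0 < α) (hℓ : 0 < ℓ) (hℓ' : ℓ ≤ 1 / Real.sqrt 2) :
    ∃ C : ℝ, 0 < C ∧ ∀ x : EuclideanSpace ℝ (Fin d),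
      (∫⁻ z in {z : EuclideanSpace ℝ (Fin d) | ℓ ≤ ‖z‖},
          ENNReal.ofReal (Real.log (1 + ‖z‖ / (1 + ‖x‖)) * ‖z‖ ^ (-(d : ℝ) - α)) ∂volume)
        ≤ ENNReal.ofReal (C * (1 + ‖x‖) ^ (-(min α 1)) *
            (1 + (if α = 1 then Real.log (1 + ‖x‖) else 0))) := by
  have hℓ1 : ℓ ≤ 1 := hℓ'.trans <| div_le_one_of_le₀ (one_le_sqrt.mpr one_le_two) (sqrt_nonneg 2)
  have : Nontrivial (EuclideanSpace ℝ (Fin d)) :=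
    Module.nontrivial_of_finrank_pos (by rw [finrank_euclideanSpace_fin]; omega)
  obtain ⟨C, hC, hradial⟩ := setLIntegral_Ici_log_one_add_div_mul_rpow_le hα hℓ hℓ1
  set V := (d : ℝ≥0∞) * volume (ball (0 : EuclideanSpace ℝ (Fin d)) 1)
  have hV : 0 < V.toReal := ENNReal.toReal_pos
    (mul_ne_zero (Nat.cast_ne_zero.mpr (by omega)) (measure_ball_pos _ _ one_pos).ne')
    (by finiteness)
  refine ⟨V.toReal * C, mul_pos hV hC, fun x ↦ ?_⟩
  have hR : 1 ≤ 1 + ‖x‖ := le_add_of_nonneg_right (norm_nonneg x)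
  have hpolar := setLIntegral_fun_norm_mul_rpow_addHaar_Ici
    (volume : Measure (EuclideanSpace ℝ (Fin d))) hℓ
    (fun r ↦ log (1 + r / (1 + ‖x‖))) (by fun_prop) α
  rw [finrank_euclideanSpace_fin] at hpolar
  calc _ = V * ∫⁻ r in Ici ℓ, ENNReal.ofReal (log (1 + r / (1 + ‖x‖)) * r ^ (-1 - α)) := hpolar
    _ ≤ ENNReal.ofReal V.toReal * ENNReal.ofReal (C * logTailRate α (1 + ‖x‖)) := by
        rw [ENNReal.ofReal_toReal (by finiteness)]
        gcongr
        exact hradial _ hR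
    _ = _ := by
        rw [← ENNReal.ofReal_mul hV.le, logTailRate]
        ring_nf

/-- For `d ≥ 1`, `α ∈ (0,2)` and `ℓ ∈ (0, 1/√2]`, there is a constant `C > 0`
(depending only on `d`, `α`, `ℓ`) such that for all `x ∈ ℝ^d`,
`∫_{|z| ≥ ℓ} log(1 + |z|/(1+|x|)) |z|^{-d-α} dz`
  `≤ C (1+|x|)^{-min(α,1)} (1 + 1_{α=1} log(1+|x|))`. -/
theorem stable_log_tail_integral_bound (d : ℕ) (hd : 1 ≤ d) (α ℓ : ℝ)
    (hα : 0 < α) (hα' : α < 2) (hℓ : 0 < ℓ) (hℓ' : ℓ ≤ 1 / Real.sqrt 2) :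
    ∃ C : ℝ, 0 < C ∧ ∀ x : EuclideanSpace ℝ (Fin d),
      (∫⁻ z in {z : EuclideanSpace ℝ (Fin d) | ℓ ≤ ‖z‖},
          ENNReal.ofReal (Real.log (1 + ‖z‖ / (1 + ‖x‖)) * ‖z‖ ^ (-(d : ℝ) - α)) ∂volume)
        ≤ ENNReal.ofReal (C * (1 + ‖x‖) ^ (-(min α 1)) *
            (1 + (if α = 1 then Real.log (1 + ‖x‖) else 0))) :=
  stable_log_tail_integral_bound_general d hd α ℓ hα hℓ hℓ'
end
end

section
/- Let ψ : ℝ → [0,∞) be twice continuously differentiable with 0 < ψ' ≤ 1 everywhere, and for y ∈ ℝ^d set V_y(x) := ψ(log(1+|x−y|²)). Then for all x, y, z ∈ ℝ^d: V_y(x+z) − V_y(x) ≤ 4 log(1 + |z|/(1+|x−y|)). -/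
noncomputable section

/-- For `V_y(x) = ψ(log(1+|x−y|²))` with `0 < ψ' ≤ 1`:
`V_y(x+z) − V_y(x) ≤ 4 log(1 + |z|/(1+|x−y|))`. -/
theorem large_jump_increment_bound {d : ℕ}
    (ψ : ℝ → ℝ) (hψ : ContDiff ℝ 2 ψ) (hψ0 : ∀ r, 0 ≤ ψ r)
    (hψ' : ∀ r, 0 < deriv ψ r) (hψ'1 : ∀ r, deriv ψ r ≤ 1)
    (y : EuclideanSpace ℝ (Fin d))
    (V : EuclideanSpace ℝ (Fin d) → ℝ)
    (hV : V = fun x => ψ (Real.log (1 + ‖x - y‖ ^ 2)))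
    (x z : EuclideanSpace ℝ (Fin d)) :
    V (x + z) - V x ≤ 4 * Real.log (1 + ‖z‖ / (1 + ‖x - y‖)) := by
  subst hV
  set a : ℝ := ‖x - y‖ with ha_def
  set s : ℝ := ‖z‖ with hs_def
  have ha : (0:ℝ) ≤ a := norm_nonneg _
  have hs : (0:ℝ) ≤ s := norm_nonneg _
  have h1a : (0:ℝ) < 1 + a := by linarith
  have hb : ‖x + z - y‖ ≤ a + s := by
    rw [add_sub_right_comm]
    exact norm_add_le _ _
  have hmono : StrictMono ψ := strictMono_of_deriv_pos hψ'
  have hdiff : Differentiable ℝ ψ := hψ.differentiable (by norm_num)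
  have hlip : LipschitzWith 1 ψ := by
    apply lipschitzWith_of_nnnorm_deriv_le hdiff
    intro r
    have h := hψ' r
    have h1 := hψ'1 r
    simp only [← NNReal.coe_le_coe, coe_nnnorm, Real.norm_eq_abs, NNReal.coe_one]
    rw [abs_of_pos h]; exact h1
  have hpos1 : (0:ℝ) < 1 + a ^ 2 := by positivity
  have hpos2 : (0:ℝ) < 1 + (a + s) ^ 2 := by positivity
  have hL1 : Real.log (1 + ‖x + z - y‖ ^ 2) ≤ Real.log (1 + (a + s) ^ 2) := by
    apply Real.log_le_log (by positivity)
    have : ‖x + z - y‖ ^ 2 ≤ (a + s) ^ 2 := by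
      apply sq_le_sq' _ hb
      nlinarith [norm_nonneg (x + z - y)]
    linarith
  have step1 : ψ (Real.log (1 + ‖x + z - y‖ ^ 2)) ≤ ψ (Real.log (1 + (a + s) ^ 2)) :=
    hmono.monotone hL1
  have hL12 : Real.log (1 + a ^ 2) ≤ Real.log (1 + (a + s) ^ 2) := by
    apply Real.log_le_log hpos1
    nlinarith
  have step2 : ψ (Real.log (1 + (a + s) ^ 2)) - ψ (Real.log (1 + a ^ 2))
      ≤ Real.log (1 + (a + s) ^ 2) - Real.log (1 + a ^ 2) := by
    have := hlip.dist_le_mul (Real.log (1 + (a + s) ^ 2)) (Real.log (1 + a ^ 2))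
    rw [Real.dist_eq, Real.dist_eq, NNReal.coe_one, one_mul] at this
    calc ψ (Real.log (1 + (a + s) ^ 2)) - ψ (Real.log (1 + a ^ 2))
        ≤ |ψ (Real.log (1 + (a + s) ^ 2)) - ψ (Real.log (1 + a ^ 2))| := le_abs_self _
      _ ≤ |Real.log (1 + (a + s) ^ 2) - Real.log (1 + a ^ 2)| := this
      _ = Real.log (1 + (a + s) ^ 2) - Real.log (1 + a ^ 2) := abs_of_nonneg (by linarith)
  have key : Real.log (1 + (a + s) ^ 2) - Real.log (1 + a ^ 2)
      ≤ 4 * Real.log (1 + s / (1 + a)) := by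
    have ht : (0:ℝ) < 1 + s / (1 + a) := by positivity
    have h4 : (4:ℝ) * Real.log (1 + s / (1 + a)) = Real.log ((1 + s / (1 + a)) ^ 4) := by
      rw [Real.log_pow]; push_cast; ring
    rw [h4, ← Real.log_div (ne_of_gt hpos2) (ne_of_gt hpos1)]
    apply Real.log_le_log (by positivity)
    rw [div_le_iff₀ hpos1]
    have hts : (1 + s / (1 + a)) * (1 + a) = 1 + a + s := by
      field_simp
    have hexp : (1 + s / (1 + a)) ^ 4 * (1 + a) ^ 4 = (1 + a + s) ^ 4 := by
      rw [← mul_pow, hts]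
    have hkey : (1 + (a + s) ^ 2) * (1 + a) ^ 4 ≤ (1 + a + s) ^ 4 * (1 + a ^ 2) := by
      nlinarith [sq_nonneg a, sq_nonneg s, sq_nonneg (a*s), sq_nonneg (a - 1), sq_nonneg (a + s),
        mul_nonneg ha hs, sq_nonneg (a*a - 1), mul_nonneg (mul_nonneg ha hs) hs,
        mul_nonneg (mul_nonneg ha ha) hs, sq_nonneg ((a-1)*s), sq_nonneg (a*s - 1),
        mul_nonneg (mul_nonneg hs hs) hs, sq_nonneg (s*(a-1))]
    have h1a4 : (0:ℝ) < (1 + a) ^ 4 := by positivity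
    calc 1 + (a + s) ^ 2 = ((1 + (a + s) ^ 2) * (1 + a) ^ 4) / (1 + a) ^ 4 := by
          field_simp
      _ ≤ ((1 + a + s) ^ 4 * (1 + a ^ 2)) / (1 + a) ^ 4 := by
          gcongr
      _ = (1 + s / (1 + a)) ^ 4 * (1 + a ^ 2) := by
          rw [← hexp]; field_simp
  calc ψ (Real.log (1 + ‖x + z - y‖ ^ 2)) - ψ (Real.log (1 + a ^ 2))
      ≤ ψ (Real.log (1 + (a + s) ^ 2)) - ψ (Real.log (1 + a ^ 2)) := by linarith
    _ ≤ Real.log (1 + (a + s) ^ 2) - Real.log (1 + a ^ 2) := step2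
    _ ≤ 4 * Real.log (1 + s / (1 + a)) := key
end
end

section
/- Let ℓ ∈ (0, 1/√2] and ε ∈ (0, ℓ]. Let (μ_s)_{s∈ℝ} be a measurable family of Borel probability measures on ℝ^d, let (s,y') ↦ ν_{s,y'} be a measurable kernel of Borel measures on ℝ^d with ν_{s,y'}({0}) = 0, and let ρ : ℝ×ℝ^d → [0,∞) be measurable with ρ(s,y) = 0 whenever |y| > ε. Fix y ∈ ℝ^d and set K := sup_{s,y'} H^{ν_{s,y'}}(y', y), assumed finite. Then for all t ∈ ℝ and x ∈ ℝ^d: ∫_ℝ ∫_{ℝ^d} [ ∫_{|z|≥ℓ} log(1 + |z|/(1+|x−y|)) ν_{s,y'}(dz) ] ρ(t−s, x−y') μ_s(dy') ds ≤ 2K ∫_ℝ ∫_{ℝ^d} ρ(t−s, x−y') μ_s(dy') ds, as an inequality in [0,∞]. -/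
open MeasureTheory ProbabilityTheory
open scoped ENNReal

noncomputable section

/-- `H^ν(x,y) := ∫_{|z|≥ℓ} log(1 + |z|/(1+|x−y|)) ν(dz)`. -/
def Hnu {d : ℕ} (ℓ : ℝ) (ν : Measure (EuclideanSpace ℝ (Fin d)))
    (x y : EuclideanSpace ℝ (Fin d)) : ℝ≥0∞ :=
  ∫⁻ z in {z : EuclideanSpace ℝ (Fin d) | ℓ ≤ ‖z‖},
    ENNReal.ofReal (Real.log (1 + ‖z‖ / (1 + ‖x - y‖))) ∂ν

/-- Regularization bound for the logarithmic jump functional: with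
`K := sup_{s,y'} H^{ν_{s,y'}}(y', y) < ∞` and `ρ(s,y)` vanishing for `|y| > ε ≤ ℓ`,
`∫∫ H^{ν_{s,y'}}(x,y) ρ(t−s, x−y') μ_s(dy') ds ≤ 2K ∫∫ ρ(t−s, x−y') μ_s(dy') ds`. -/
theorem mollification_log_jump_bound {d : ℕ} (ℓ ε : ℝ)
    (hℓ : 0 < ℓ) (hℓ' : ℓ ≤ 1 / Real.sqrt 2) (hε : 0 < ε) (hε' : ε ≤ ℓ)
    (μ : Kernel ℝ (EuclideanSpace ℝ (Fin d))) [IsMarkovKernel μ]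
    (ν : Kernel (ℝ × EuclideanSpace ℝ (Fin d)) (EuclideanSpace ℝ (Fin d)))
    (hν0 : ∀ p, ν p {0} = 0)
    (ρ : ℝ × EuclideanSpace ℝ (Fin d) → ℝ) (hρ_meas : Measurable ρ)
    (hρ_nonneg : ∀ p, 0 ≤ ρ p)
    (hρ_supp : ∀ (s : ℝ) (w : EuclideanSpace ℝ (Fin d)), ε < ‖w‖ → ρ (s, w) = 0)
    (y : EuclideanSpace ℝ (Fin d))
    (hK : (⨆ p : ℝ × EuclideanSpace ℝ (Fin d), Hnu ℓ (ν p) p.2 y) ≠ ⊤)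
    (t : ℝ) (x : EuclideanSpace ℝ (Fin d)) :
    (∫⁻ s, ∫⁻ y', Hnu ℓ (ν (s, y')) x y * ENNReal.ofReal (ρ (t - s, x - y')) ∂(μ s))
      ≤ 2 * (⨆ p : ℝ × EuclideanSpace ℝ (Fin d), Hnu ℓ (ν p) p.2 y)
          * ∫⁻ s, ∫⁻ y', ENNReal.ofReal (ρ (t - s, x - y')) ∂(μ s) := by
  set K := ⨆ p : ℝ × EuclideanSpace ℝ (Fin d), Hnu ℓ (ν p) p.2 y with hKdef
  have h2K : (2 * K) ≠ ⊤ := ENNReal.mul_ne_top (by simp) hK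
  have hε1 : ε ≤ 1 := by
    have h12 : (1:ℝ) ≤ Real.sqrt 2 := by
      rw [show (1:ℝ) = Real.sqrt 1 by simp]
      exact Real.sqrt_le_sqrt one_le_two
    have : (1:ℝ) / Real.sqrt 2 ≤ 1 := by
      rw [div_le_one (lt_of_lt_of_le one_pos h12)]; exact h12
    linarith [hε'.trans hℓ']
  have key : ∀ s y', Hnu ℓ (ν (s, y')) x y * ENNReal.ofReal (ρ (t - s, x - y'))
      ≤ (2 * K) * ENNReal.ofReal (ρ (t - s, x - y')) := by
    intro s y'
    by_cases h : ρ (t - s, x - y') = 0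
    · simp [h]
    · have hw : ‖x - y'‖ ≤ ε := by
        by_contra hc
        exact h (hρ_supp _ _ (lt_of_not_ge hc))
      have hw1 : ‖x - y'‖ ≤ 1 := hw.trans hε1
      have hH : Hnu ℓ (ν (s, y')) x y ≤ 2 * Hnu ℓ (ν (s, y')) y' y := by
        rw [Hnu, Hnu, ← lintegral_const_mul' 2 _ (by simp)]
        refine lintegral_mono fun z => ?_
        have hr : (0:ℝ) ≤ ‖z‖ := norm_nonneg _
        have ha : (0:ℝ) < 1 + ‖x - y‖ := by positivity
        have hb : (0:ℝ) < 1 + ‖y' - y‖ := by positivity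
        have hofr : (2:ℝ≥0∞) * ENNReal.ofReal (Real.log (1 + ‖z‖ / (1 + ‖y' - y‖)))
            = ENNReal.ofReal (2 * Real.log (1 + ‖z‖ / (1 + ‖y' - y‖))) := by
          rw [ENNReal.ofReal_mul (by norm_num)]; norm_num
        rw [hofr]
        apply ENNReal.ofReal_le_ofReal
        set r := ‖z‖
        set a := 1 + ‖x - y‖
        set b := 1 + ‖y' - y‖
        have hba : b ≤ a + 1 := by
          have : ‖y' - y‖ ≤ ‖y' - x‖ + ‖x - y‖ := norm_sub_le_norm_sub_add_norm_sub _ _ _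
          have h2 : ‖y' - x‖ ≤ 1 := by rw [norm_sub_rev]; exact hw1
          simp only [a, b]; linarith
        have hia : 1 / a ≤ 2 / b := by
          rcases le_or_gt b 2 with hb2 | hb2
          · have h1 : 1 / a ≤ 1 := by
              rw [div_le_one ha]; simp only [a]; linarith [norm_nonneg (x - y)]
            have h2 : (1:ℝ) ≤ 2 / b := by
              rw [le_div_iff₀ hb]; linarith
            linarith
          · rw [div_le_div_iff₀ ha hb]; linarith
        have hmain : 1 + r / a ≤ (1 + r / b) ^ 2 := by
          have h1 : r / a ≤ 2 * (r / b) := by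
            calc r / a = r * (1 / a) := by ring
            _ ≤ r * (2 / b) := mul_le_mul_of_nonneg_left hia hr
            _ = 2 * (r / b) := by ring
          nlinarith [sq_nonneg (r / b)]
        calc Real.log (1 + r / a) ≤ Real.log ((1 + r / b) ^ 2) := by
              apply Real.log_le_log (by positivity) hmain
          _ = 2 * Real.log (1 + r / b) := by
              rw [show ((1 + r / b) ^ 2) = (1 + r / b) ^ (2:ℕ) by norm_num,
                Real.log_pow]; norm_num
      have hH' : Hnu ℓ (ν (s, y')) x y ≤ 2 * K := by
        refine hH.trans (mul_le_mul_right ?_ 2)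
        exact le_iSup (fun p : ℝ × EuclideanSpace ℝ (Fin d) => Hnu ℓ (ν p) p.2 y) (s, y')
      exact mul_le_mul_left hH' _
  calc (∫⁻ s, ∫⁻ y', Hnu ℓ (ν (s, y')) x y * ENNReal.ofReal (ρ (t - s, x - y')) ∂(μ s))
      ≤ ∫⁻ s, ∫⁻ y', (2 * K) * ENNReal.ofReal (ρ (t - s, x - y')) ∂(μ s) :=
        lintegral_mono fun s => lintegral_mono fun y' => key s y'
    _ = 2 * K * ∫⁻ s, ∫⁻ y', ENNReal.ofReal (ρ (t - s, x - y')) ∂(μ s) := by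
        simp_rw [lintegral_const_mul' _ _ h2K]
end
end

section
/- Let I be a nonempty index set and (μ_i)_{i∈I} a family of Borel probability measures on ℝ^d such that lim_{n→∞} sup_{i∈I} μ_i({x : |x| > n}) = 0. Then there exists a twice continuously differentiable function ψ : ℝ → ℝ such that on [0,∞): ψ ≥ 0, ψ(0) = 0, 0 < ψ' ≤ 1, −2 ≤ ψ'' ≤ 0, ψ(r) → ∞ as r → ∞, and moreover sup_{i∈I} ∫_{ℝ^d} ψ(log(1+|x|²)) μ_i(dx) < ∞. -/
/-!
The Lyapunov function is `ψ t = ∑ₖ arctan (cₖ t)` for positive weights with `∑ₖ cₖ ≤ 1`. Each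
summand is smooth, concave on `[0, ∞)`, has slope at most `cₖ` and tends to `π / 2`, which gives
the derivative bounds and `ψ → ∞`. Tightness provides radii `Rₖ` with `μᵢ {|x| > Rₖ} ≤ 2⁻ᵏ⁻¹`
for all `i`; choosing `cₖ log (1 + Rₖ²) ≤ 2⁻ᵏ⁻¹`, the `k`-th summand of `ψ (log (1 + |x|²))` is
at most `2⁻ᵏ⁻¹` on the ball of radius `Rₖ` and at most `2` outside it, so its integral is at most
`3 · 2⁻ᵏ⁻¹` for every `i`.
-/

open MeasureTheory Filter Real
open scoped ENNReal Topology

noncomputable section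

theorem Real.arctan_le_self {x : ℝ} (hx : 0 ≤ x) : arctan x ≤ x := by
  simpa [tan_arctan] using le_tan (arctan_nonneg.2 hx) (arctan_lt_pi_div_two x)

theorem Real.abs_two_mul_div_one_add_sq_sq_le_one (u : ℝ) :
    |2 * u / (1 + u ^ 2) ^ 2| ≤ 1 := by
  rw [abs_div, abs_of_pos (by positivity : (0 : ℝ) < (1 + u ^ 2) ^ 2), div_le_one (by positivity),
    abs_mul, abs_two]
  nlinarith [sq_abs u, sq_nonneg (|u| - 1), sq_nonneg u]

theorem hasDerivAt_arctan_mul (c t : ℝ) :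
    HasDerivAt (fun t => arctan (c * t)) (c / (1 + (c * t) ^ 2)) t := by
  refine ((hasDerivAt_arctan (c * t)).comp t ((hasDerivAt_id' t).const_mul c)).congr_deriv ?_
  ring

theorem hasDerivAt_div_one_add_mul_sq (c t : ℝ) :
    HasDerivAt (fun t => c / (1 + (c * t) ^ 2))
      (-(c ^ 2 * (2 * (c * t) / (1 + (c * t) ^ 2) ^ 2))) t := by
  have hden : HasDerivAt (fun t => 1 + (c * t) ^ 2) (2 * (c * t) * c) t := by
    simpa using ((hasDerivAt_pow 2 (c * t)).comp t ((hasDerivAt_id' t).const_mul c)).const_add 1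
  refine ((hasDerivAt_const t c).div hden (by positivity)).congr_deriv ?_
  ring

theorem norm_neg_sq_mul_two_mul_div_le (c u : ℝ) :
    ‖-(c ^ 2 * (2 * u / (1 + u ^ 2) ^ 2))‖ ≤ c ^ 2 := by
  rw [norm_neg, norm_mul, Real.norm_eq_abs, abs_sq]
  exact mul_le_of_le_one_right (sq_nonneg _) (abs_two_mul_div_one_add_sq_sq_le_one _)

theorem Summable.sq_le_tsum_mul {c : ℕ → ℝ} (hc : Summable c) (hc0 : ∀ k, 0 ≤ c k) (k : ℕ) :
    c k ^ 2 ≤ (∑' j, c j) * c k := by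
  rw [sq]
  exact mul_le_mul_of_nonneg_right (hc.le_tsum k fun j _ => hc0 j) (hc0 k)

theorem Summable.sq_of_nonneg {c : ℕ → ℝ} (hc : Summable c) (hc0 : ∀ k, 0 ≤ c k) :
    Summable fun k => c k ^ 2 :=
  .of_nonneg_of_le (fun _ => sq_nonneg _) (hc.sq_le_tsum_mul hc0) (hc.mul_left _)

def arctanSeries (c : ℕ → ℝ) (t : ℝ) : ℝ := ∑' k, arctan (c k * t)

section arctanSeries

variable {c : ℕ → ℝ}

@[simp]
theorem arctanSeries_zero : arctanSeries c 0 = 0 := by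
  simp [arctanSeries]

theorem summable_arctan_mul (hc0 : ∀ k, 0 ≤ c k) (hc : Summable c) {t : ℝ} (ht : 0 ≤ t) :
    Summable fun k => arctan (c k * t) :=
  .of_nonneg_of_le (fun k => arctan_nonneg.2 (by have := hc0 k; positivity))
    (fun k => arctan_le_self (by have := hc0 k; positivity)) (hc.mul_right t)

theorem arctanSeries_nonneg (hc0 : ∀ k, 0 ≤ c k) {t : ℝ} (ht : 0 ≤ t) :
    0 ≤ arctanSeries c t :=
  tsum_nonneg fun k => arctan_nonneg.2 (by have := hc0 k; positivity)

theorem hasDerivAt_arctanSeries (hc : Summable c) (t : ℝ) :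
    HasDerivAt (arctanSeries c) (∑' k, c k / (1 + (c k * t) ^ 2)) t := by
  refine hasDerivAt_tsum hc.abs (fun k t => hasDerivAt_arctan_mul (c k) t) (fun k t => ?_)
    (y₀ := 0) (by simp) t
  rw [norm_div, Real.norm_eq_abs, Real.norm_of_nonneg (by positivity)]
  exact div_le_self (abs_nonneg _) (by nlinarith [sq_nonneg (c k * t)])

theorem hasDerivAt_tsum_div_one_add_mul_sq (hc0 : ∀ k, 0 ≤ c k) (hc : Summable c) (t : ℝ) :
    HasDerivAt (fun t => ∑' k, c k / (1 + (c k * t) ^ 2))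
      (∑' k, -(c k ^ 2 * (2 * (c k * t) / (1 + (c k * t) ^ 2) ^ 2))) t := by
  refine hasDerivAt_tsum (hc.sq_of_nonneg hc0) (fun k t => hasDerivAt_div_one_add_mul_sq (c k) t)
    (fun k t => norm_neg_sq_mul_two_mul_div_le _ _) (y₀ := 0) (by simpa using hc) t

theorem deriv_arctanSeries (hc : Summable c) :
    deriv (arctanSeries c) = fun t => ∑' k, c k / (1 + (c k * t) ^ 2) :=
  funext fun t => (hasDerivAt_arctanSeries hc t).deriv

theorem deriv_deriv_arctanSeries (hc0 : ∀ k, 0 ≤ c k) (hc : Summable c) :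
    deriv (deriv (arctanSeries c)) =
      fun t => ∑' k, -(c k ^ 2 * (2 * (c k * t) / (1 + (c k * t) ^ 2) ^ 2)) := by
  rw [deriv_arctanSeries hc]
  exact funext fun t => (hasDerivAt_tsum_div_one_add_mul_sq hc0 hc t).deriv

theorem contDiff_two_arctanSeries (hc0 : ∀ k, 0 ≤ c k) (hc : Summable c) :
    ContDiff ℝ 2 (arctanSeries c) := by
  rw [show (2 : WithTop ℕ∞) = 1 + 1 from rfl, contDiff_succ_iff_deriv, contDiff_one_iff_deriv,
    deriv_deriv_arctanSeries hc0 hc, deriv_arctanSeries hc]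
  refine ⟨fun t => (hasDerivAt_arctanSeries hc t).differentiableAt, by simp,
    fun t => (hasDerivAt_tsum_div_one_add_mul_sq hc0 hc t).differentiableAt, ?_⟩
  exact continuous_tsum (fun k => by fun_prop (disch := intro t; positivity))
    (hc.sq_of_nonneg hc0) fun k t => norm_neg_sq_mul_two_mul_div_le _ _

theorem summable_div_one_add_mul_sq (hc0 : ∀ k, 0 ≤ c k) (hc : Summable c) (t : ℝ) :
    Summable fun k => c k / (1 + (c k * t) ^ 2) :=
  .of_nonneg_of_le (fun k => by have := hc0 k; positivity)
    (fun k => div_le_self (hc0 k) (by nlinarith [sq_nonneg (c k * t)])) hc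

theorem deriv_arctanSeries_pos (hc_pos : ∀ k, 0 < c k) (hc : Summable c) (t : ℝ) :
    0 < deriv (arctanSeries c) t := by
  rw [deriv_arctanSeries hc]
  exact (summable_div_one_add_mul_sq (fun k => (hc_pos k).le) hc t).tsum_pos
    (fun k => by have := hc_pos k; positivity) 0 (by have := hc_pos 0; positivity)

theorem deriv_arctanSeries_le_tsum (hc0 : ∀ k, 0 ≤ c k) (hc : Summable c) (t : ℝ) :
    deriv (arctanSeries c) t ≤ ∑' k, c k := by
  rw [deriv_arctanSeries hc]
  exact (summable_div_one_add_mul_sq hc0 hc t).tsum_le_tsum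
    (fun k => div_le_self (hc0 k) (by nlinarith [sq_nonneg (c k * t)])) hc

theorem deriv_deriv_arctanSeries_nonpos (hc0 : ∀ k, 0 ≤ c k) (hc : Summable c) {t : ℝ}
    (ht : 0 ≤ t) : deriv (deriv (arctanSeries c)) t ≤ 0 := by
  rw [deriv_deriv_arctanSeries hc0 hc]
  exact tsum_nonpos fun k => neg_nonpos.2 (by have := hc0 k; positivity)

theorem neg_sq_tsum_le_deriv_deriv_arctanSeries (hc0 : ∀ k, 0 ≤ c k) (hc : Summable c) (t : ℝ) :
    -(∑' k, c k) ^ 2 ≤ deriv (deriv (arctanSeries c)) t := by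
  rw [deriv_deriv_arctanSeries hc0 hc]
  have hterm (k : ℕ) :
      -((∑' j, c j) * c k) ≤ -(c k ^ 2 * (2 * (c k * t) / (1 + (c k * t) ^ 2) ^ 2)) :=
    neg_le_neg <| (mul_le_of_le_one_right (sq_nonneg _) ((le_abs_self _).trans
      (abs_two_mul_div_one_add_sq_sq_le_one _))).trans (hc.sq_le_tsum_mul hc0 k)
  calc -(∑' k, c k) ^ 2 = ∑' k, -((∑' j, c j) * c k) := by rw [tsum_neg, tsum_mul_left, sq]
    _ ≤ _ := (hc.mul_left _).neg.tsum_le_tsum hterm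
        (.of_norm_bounded (hc.sq_of_nonneg hc0) fun k => norm_neg_sq_mul_two_mul_div_le _ _)

theorem tendsto_arctanSeries_atTop (hc_pos : ∀ k, 0 < c k) (hc : Summable c) :
    Tendsto (arctanSeries c) atTop atTop := by
  refine tendsto_atTop.2 fun b => ?_
  obtain ⟨N, hN⟩ := exists_nat_gt b
  have hpartial : Tendsto (fun t => ∑ k ∈ Finset.range N, arctan (c k * t)) atTop
      (𝓝 (N * (π / 2))) := by
    simpa using tendsto_finsetSum (Finset.range N) fun k _ =>
      (tendsto_nhds_of_tendsto_nhdsWithin tendsto_arctan_atTop).comp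
        (tendsto_id.const_mul_atTop (hc_pos k))
  have hb : b < N * (π / 2) :=
    hN.trans_le (le_mul_of_one_le_right (Nat.cast_nonneg N) one_le_pi_div_two)
  filter_upwards [hpartial.eventually (lt_mem_nhds hb), eventually_ge_atTop 0] with t hlt ht
  exact hlt.le.trans <| (summable_arctan_mul (fun k => (hc_pos k).le) hc ht).sum_le_tsum _
    fun k _ => arctan_nonneg.2 (by have := hc_pos k; positivity)

end arctanSeries

theorem Real.ofReal_arctan_le_ofReal (y : ℝ) : ENNReal.ofReal (arctan y) ≤ ENNReal.ofReal y := by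
  rcases le_total 0 y with hy | hy
  · exact ENNReal.ofReal_le_ofReal (arctan_le_self hy)
  · simp [ENNReal.ofReal_of_nonpos (arctan_le_zero.2 hy)]

section lintegral

variable {X : Type*} [MeasurableSpace X] (μ : Measure X) [IsProbabilityMeasure μ] {f : X → ℝ}

theorem lintegral_ofReal_arctan_mul_le (hf : Measurable f) {c : ℝ} (hc : 0 ≤ c) (a : ℝ) :
    ∫⁻ x, ENNReal.ofReal (arctan (c * f x)) ∂μ ≤ ENNReal.ofReal (c * a) + 2 * μ {x | a < f x} := by
  have hs : MeasurableSet {x | a < f x} := measurableSet_lt measurable_const hf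
  have hpt (x : X) : ENNReal.ofReal (arctan (c * f x)) ≤
      ENNReal.ofReal (c * a) + {x | a < f x}.indicator (fun _ => 2) x := by
    by_cases hx : a < f x
    · rw [Set.indicator_of_mem (show x ∈ {x | a < f x} from hx)]
      exact le_add_left ((ENNReal.ofReal_le_ofReal ((arctan_lt_pi_div_two _).le.trans
        pi_div_two_le_two)).trans_eq (ENNReal.ofReal_ofNat 2))
    · rw [Set.indicator_of_notMem (show x ∉ {x | a < f x} from hx), add_zero]
      exact (ENNReal.ofReal_le_ofReal (arctan_le_arctan_iff.2
        (mul_le_mul_of_nonneg_left (not_lt.1 hx) hc))).trans (ofReal_arctan_le_ofReal _)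
  calc ∫⁻ x, ENNReal.ofReal (arctan (c * f x)) ∂μ
      ≤ ∫⁻ x, (ENNReal.ofReal (c * a) + {x | a < f x}.indicator (fun _ => 2) x) ∂μ :=
        lintegral_mono hpt
    _ = ENNReal.ofReal (c * a) + 2 * μ {x | a < f x} := by
        rw [lintegral_add_left measurable_const, lintegral_const, measure_univ, mul_one,
          lintegral_indicator_const hs]

theorem lintegral_ofReal_arctanSeries_comp_le {c : ℕ → ℝ} (hc0 : ∀ k, 0 ≤ c k)
    (hc : Summable c) (hf : Measurable f) (hf0 : ∀ x, 0 ≤ f x) (a : ℕ → ℝ) :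
    ∫⁻ x, ENNReal.ofReal (arctanSeries c (f x)) ∂μ ≤
      ∑' k, (ENNReal.ofReal (c k * a k) + 2 * μ {x | a k < f x}) :=
  calc ∫⁻ x, ENNReal.ofReal (arctanSeries c (f x)) ∂μ
      = ∫⁻ x, ∑' k, ENNReal.ofReal (arctan (c k * f x)) ∂μ := by
        refine lintegral_congr fun x => ENNReal.ofReal_tsum_of_nonneg
          (fun k => arctan_nonneg.2 ?_) (summable_arctan_mul hc0 hc (hf0 x))
        exact mul_nonneg (hc0 k) (hf0 x)
    _ = ∑' k, ∫⁻ x, ENNReal.ofReal (arctan (c k * f x)) ∂μ :=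
        lintegral_tsum fun k => by fun_prop
    _ ≤ _ := ENNReal.tsum_le_tsum fun k => lintegral_ofReal_arctan_mul_le μ hf (hc0 k) (a k)

theorem lintegral_ofReal_arctanSeries_comp_le_three {c a : ℕ → ℝ} (hc0 : ∀ k, 0 ≤ c k)
    (hc : Summable c) (hf : Measurable f) (hf0 : ∀ x, 0 ≤ f x)
    (hca : ∀ k, c k * a k ≤ 1 / 2 / 2 ^ k)
    (htail : ∀ k, μ {x | a k < f x} ≤ ENNReal.ofReal (1 / 2 / 2 ^ k)) :
    ∫⁻ x, ENNReal.ofReal (arctanSeries c (f x)) ∂μ ≤ ENNReal.ofReal 3 :=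
  calc ∫⁻ x, ENNReal.ofReal (arctanSeries c (f x)) ∂μ
      ≤ ∑' k, (ENNReal.ofReal (c k * a k) + 2 * μ {x | a k < f x}) :=
        lintegral_ofReal_arctanSeries_comp_le μ hc0 hc hf hf0 a
    _ ≤ ∑' k, ENNReal.ofReal (3 * (1 / 2 / 2 ^ k)) := by
        refine ENNReal.tsum_le_tsum fun k => ?_
        calc _ ≤ ENNReal.ofReal (1 / 2 / 2 ^ k) + 2 * ENNReal.ofReal (1 / 2 / 2 ^ k) := by
              gcongr
              · exact hca k
              · exact htail k
          _ = ENNReal.ofReal (3 * (1 / 2 / 2 ^ k)) := by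
              rw [ENNReal.ofReal_mul (by norm_num), ENNReal.ofReal_ofNat]
              ring
    _ = ENNReal.ofReal 3 := by
        rw [← ENNReal.ofReal_tsum_of_nonneg (fun k => by positivity)
          ((summable_geometric_two' 1).mul_left 3), tsum_mul_left, tsum_geometric_two', mul_one]

end lintegral

theorem exists_nat_forall_measure_setOf_lt_le {X I : Type*} [MeasurableSpace X]
    {μ : I → Measure X} {f : X → ℝ}
    (htight : Tendsto (fun n : ℕ => ⨆ i, μ i {x | (n : ℝ) < f x}) atTop (𝓝 0))
    {ε : ℝ≥0∞} (hε : 0 < ε) : ∃ R : ℕ, ∀ i, μ i {x | (R : ℝ) < f x} ≤ ε :=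
  (ENNReal.tendsto_nhds_zero.1 htight ε hε).exists.imp fun _ hR i =>
    (le_iSup (fun i => μ i _) i).trans hR

theorem setOf_log_one_add_sq_lt_subset {E : Type*} [SeminormedAddGroup E] (r : ℝ) :
    {x : E | Real.log (1 + r ^ 2) < Real.log (1 + ‖x‖ ^ 2)} ⊆ {x | r < ‖x‖} := fun x hx =>
  lt_of_pow_lt_pow_left₀ 2 (norm_nonneg x)
    (by linarith [(Real.log_lt_log_iff (by positivity) (by positivity)).1 hx])

theorem exists_pos_summable_tsum_le_one_mul_le (a : ℕ → ℝ) (ha : ∀ k, 0 ≤ a k) :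
    ∃ c : ℕ → ℝ, (∀ k, 0 < c k) ∧ Summable c ∧ ∑' k, c k ≤ 1 ∧
      ∀ k, c k * a k ≤ 1 / 2 / 2 ^ k := by
  have hc_le (k : ℕ) : 1 / 2 / 2 ^ k / (1 + a k) ≤ 1 / 2 / 2 ^ k :=
    div_le_self (by positivity) (by linarith [ha k])
  have hc : Summable fun k => 1 / 2 / 2 ^ k / (1 + a k) :=
    .of_nonneg_of_le (fun k => by have := ha k; positivity) hc_le (summable_geometric_two' 1)
  refine ⟨fun k => 1 / 2 / 2 ^ k / (1 + a k), fun k => by have := ha k; positivity, hc,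
    (hc.tsum_le_tsum hc_le (summable_geometric_two' 1)).trans (tsum_geometric_two' 1).le,
    fun k => ?_⟩
  have := ha k
  rw [div_mul_eq_mul_div, div_le_iff₀ (by positivity)]
  nlinarith [show (0 : ℝ) < 1 / 2 / 2 ^ k by positivity]

theorem exists_uniform_lyapunov_function_general {d : ℕ} {I : Type*}
    (μ : I → Measure (EuclideanSpace ℝ (Fin d)))
    (hμ : ∀ i, IsProbabilityMeasure (μ i))
    (htight : Tendsto (fun n : ℕ => ⨆ i, μ i {x : EuclideanSpace ℝ (Fin d) | (n : ℝ) < ‖x‖})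
      atTop (𝓝 0)) :
    ∃ ψ : ℝ → ℝ, ContDiff ℝ 2 ψ ∧
      (∀ r : ℝ, 0 ≤ r → 0 ≤ ψ r) ∧ ψ 0 = 0 ∧
      (∀ r : ℝ, 0 ≤ r → 0 < deriv ψ r ∧ deriv ψ r ≤ 1) ∧
      (∀ r : ℝ, 0 ≤ r → -2 ≤ deriv (deriv ψ) r ∧ deriv (deriv ψ) r ≤ 0) ∧
      Tendsto ψ atTop atTop ∧
      ∃ M : ℝ, ∀ i,
        (∫⁻ x, ENNReal.ofReal (ψ (Real.log (1 + ‖x‖ ^ 2))) ∂(μ i)) ≤ ENNReal.ofReal M := by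
  choose R hR using fun k : ℕ => exists_nat_forall_measure_setOf_lt_le (f := norm) htight
    (by positivity : 0 < ENNReal.ofReal (1 / 2 / 2 ^ k))
  obtain ⟨c, hc_pos, hc, hc_le, hca⟩ := exists_pos_summable_tsum_le_one_mul_le
    (fun k => Real.log (1 + (R k : ℝ) ^ 2)) fun k => Real.log_nonneg (by nlinarith)
  have hc0 (k : ℕ) : 0 ≤ c k := (hc_pos k).le
  refine ⟨arctanSeries c, contDiff_two_arctanSeries hc0 hc, fun r => arctanSeries_nonneg hc0,
    arctanSeries_zero, fun r _ => ⟨deriv_arctanSeries_pos hc_pos hc r,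
      (deriv_arctanSeries_le_tsum hc0 hc r).trans hc_le⟩,
    fun r hr => ⟨?_, deriv_deriv_arctanSeries_nonpos hc0 hc hr⟩,
    tendsto_arctanSeries_atTop hc_pos hc, 3, fun i => ?_⟩
  · nlinarith [neg_sq_tsum_le_deriv_deriv_arctanSeries hc0 hc r, (tsum_nonneg hc0 : 0 ≤ ∑' k, c k)]
  · have := hμ i
    exact lintegral_ofReal_arctanSeries_comp_le_three (μ i) hc0 hc (by fun_prop)
      (fun x => Real.log_nonneg (by nlinarith [norm_nonneg x])) hca
      fun k => (measure_mono (setOf_log_one_add_sq_lt_subset _)).trans (hR k i)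

/-- For a uniformly tight family `(μ_i)` of probability measures on `ℝ^d` there is a
`C²` function `ψ` with `ψ ≥ 0`, `ψ(0) = 0`, `0 < ψ' ≤ 1`, `−2 ≤ ψ'' ≤ 0` on `[0,∞)`,
`ψ(r) → ∞` as `r → ∞`, and `sup_i ∫ ψ(log(1+|x|²)) μ_i(dx) < ∞`. -/
theorem exists_uniform_lyapunov_function {d : ℕ} {I : Type*} [Nonempty I]
    (μ : I → Measure (EuclideanSpace ℝ (Fin d)))
    (hμ : ∀ i, IsProbabilityMeasure (μ i))
    (htight : Tendsto (fun n : ℕ => ⨆ i, μ i {x : EuclideanSpace ℝ (Fin d) | (n : ℝ) < ‖x‖})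
      atTop (𝓝 0)) :
    ∃ ψ : ℝ → ℝ, ContDiff ℝ 2 ψ ∧
      (∀ r : ℝ, 0 ≤ r → 0 ≤ ψ r) ∧ ψ 0 = 0 ∧
      (∀ r : ℝ, 0 ≤ r → 0 < deriv ψ r ∧ deriv ψ r ≤ 1) ∧
      (∀ r : ℝ, 0 ≤ r → -2 ≤ deriv (deriv ψ) r ∧ deriv (deriv ψ) r ≤ 0) ∧
      Tendsto ψ atTop atTop ∧
      ∃ M : ℝ, ∀ i,
        (∫⁻ x, ENNReal.ofReal (ψ (Real.log (1 + ‖x‖ ^ 2))) ∂(μ i)) ≤ ENNReal.ofReal M :=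
  exists_uniform_lyapunov_function_general μ hμ htight
end
end

section
/- Let ℓ ∈ (0, 1/√2] and R > 0. Let f : ℝ^d → ℝ be twice continuously differentiable with f(x) = 0 whenever |x| > R, and let π : ℝ^d → ℝ^d be Lipschitz continuous with π(z) = z for |z| ≤ ℓ and π(z) = 0 for |z| > 2ℓ. Define Θ^π_f(x;z) := f(x+z) − f(x) − π(z)·∇f(x). Then there exists a constant C > 0, depending only on f, π, R and ℓ, such that for all x ∈ ℝ^d and all z, z' ∈ ℝ^d with |z'| ≤ |z|: |Θ^π_f(x;z) − Θ^π_f(x;z')| ≤ C · min(|z−z'|, 1) · ( 1_{|x|≤R+ℓ} · 1_{|z|≤ℓ} · |z| + 1_{|z| > max(ℓ, |x|−R)} ). -/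
open scoped RealInnerProductSpace

noncomputable section

/-- `Θ^π_f(x;z) := f(x+z) − f(x) − π(z)·∇f(x)`. -/
def ThetaPi {d : ℕ} (π : EuclideanSpace ℝ (Fin d) → EuclideanSpace ℝ (Fin d))
    (f : EuclideanSpace ℝ (Fin d) → ℝ) (x z : EuclideanSpace ℝ (Fin d)) : ℝ :=
  f (x + z) - f x - ⟪π z, gradient f x⟫

/-! The difference `Θ(x;z) − Θ(x;z')` is `f(x+z) − f(x+z') − Df(x)(π z − π z')`. As `f` is `C²`
with compact support and `π` vanishes outside a ball, `f`, `Df` and `π` are bounded and Lipschitz,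
which bounds the difference by a multiple of `min(|z − z'|, 1)`. If `|z| ≤ ℓ`, then `π` fixes `z`
and `z'`, and the mean value theorem for the Lipschitz map `Df` on the segment `[x+z', x+z]`, which
stays within `|z|` of `x`, gives a bound of order `|z| |z − z'|`. If `|z| ≤ |x| − R`, then `x`,
`x + z` and `x + z'` lie outside the open ball of radius `R`, where `f` and `Df` vanish by
continuity, so both terms are zero. -/

open scoped NNReal
open Metric

theorem le_max_mul_min_one {a b c t : ℝ} (ht : 0 ≤ t) (hb : a ≤ b * t) (hc : a ≤ c) :
    a ≤ max b c * min t 1 := by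
  rcases le_total t 1 with h | h
  · rw [min_eq_left h]
    exact hb.trans (mul_le_mul_of_nonneg_right (le_max_left b c) ht)
  · rw [min_eq_right h, mul_one]
    exact hc.trans (le_max_right b c)

section NormedSpace

variable {E F : Type*} [NormedAddCommGroup E]

theorem hasCompactSupport_of_eq_zero_of_lt_norm [ProperSpace E] [Zero F] {f : E → F} {R : ℝ}
    (h : ∀ x, R < ‖x‖ → f x = 0) : HasCompactSupport f :=
  HasCompactSupport.intro (isCompact_closedBall 0 R) fun x hx => h x (by simpa using hx)

variable [NormedSpace ℝ E]

theorem eq_zero_of_le_norm [TopologicalSpace F] [T1Space F] [Zero F] {f : E → F}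
    (hf : Continuous f) {R : ℝ} (hR : R ≠ 0) (h : ∀ x, R < ‖x‖ → f x = 0) {x : E}
    (hx : R ≤ ‖x‖) : f x = 0 := by
  have hx' : x ∈ closure (closedBall (0 : E) R)ᶜ := by
    rw [closure_compl, interior_closedBall 0 hR]
    simpa using hx
  refine ((isClosed_singleton.preimage hf).closure_subset_iff.2 ?_) hx'
  intro y hy
  exact h y (by simpa using hy)

variable [NormedAddCommGroup F] [NormedSpace ℝ F]

theorem fderiv_eq_zero_of_lt_norm {f : E → F} {R : ℝ} (h : ∀ x, R < ‖x‖ → f x = 0) {x : E}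
    (hx : R < ‖x‖) : fderiv ℝ f x = 0 := by
  have hloc : f =ᶠ[nhds x] fun _ => 0 :=
    Filter.eventually_of_mem ((isOpen_lt continuous_const continuous_norm).mem_nhds hx) h
  rw [hloc.fderiv_eq, fderiv_const_apply]

theorem norm_sub_sub_fderiv_le_of_lipschitzWith_fderiv {f : E → F} {K : ℝ≥0}
    (hf : Differentiable ℝ f) (hK : LipschitzWith K (fderiv ℝ f)) (x : E) {z z' : E}
    (hz : ‖z'‖ ≤ ‖z‖) :
    ‖f (x + z) - f (x + z') - fderiv ℝ f x (z - z')‖ ≤ K * ‖z‖ * ‖z - z'‖ := by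
  have hseg : segment ℝ (x + z') (x + z) ⊆ closedBall x ‖z‖ :=
    (convex_closedBall x ‖z‖).segment_subset (by simpa [dist_eq_norm] using hz)
      (by simp [dist_eq_norm])
  have hderiv : ∀ w ∈ segment ℝ (x + z') (x + z), ‖fderiv ℝ f w - fderiv ℝ f x‖ ≤ K * ‖z‖ := by
    intro w hw
    calc ‖fderiv ℝ f w - fderiv ℝ f x‖ ≤ K * dist w x := by
          rw [← dist_eq_norm]; exact hK.dist_le_mul w x
      _ ≤ K * ‖z‖ := by gcongr; exact hseg hw
  simpa [add_sub_add_left_eq_sub] using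
    (convex_segment _ _).norm_image_sub_le_of_norm_fderiv_le' (fun w _ => hf w) hderiv
      (left_mem_segment ℝ _ _) (right_mem_segment ℝ _ _)

end NormedSpace

section ThetaPi

variable {d : ℕ} {π : EuclideanSpace ℝ (Fin d) → EuclideanSpace ℝ (Fin d)}
  {f : EuclideanSpace ℝ (Fin d) → ℝ}

theorem thetaPi_eq (x z : EuclideanSpace ℝ (Fin d)) :
    ThetaPi π f x z = f (x + z) - f x - fderiv ℝ f x (π z) := by
  rw [ThetaPi, real_inner_comm, inner_gradient_left]

theorem thetaPi_sub_thetaPi (x z z' : EuclideanSpace ℝ (Fin d)) :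
    ThetaPi π f x z - ThetaPi π f x z' =
      f (x + z) - f (x + z') - fderiv ℝ f x (π z - π z') := by
  rw [thetaPi_eq, thetaPi_eq, map_sub]
  ring

theorem abs_thetaPi_le {Lf : ℝ≥0} {M B : ℝ} (hf : LipschitzWith Lf f) (hfM : ∀ y, |f y| ≤ M)
    (hπB : ∀ z, ‖π z‖ ≤ B) (x z : EuclideanSpace ℝ (Fin d)) :
    |ThetaPi π f x z| ≤ 2 * M + Lf * B := by
  have hderiv : |fderiv ℝ f x (π z)| ≤ Lf * B := by
    rw [← Real.norm_eq_abs]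
    exact (fderiv ℝ f x).le_of_opNorm_le_of_le (norm_fderiv_le_of_lipschitz ℝ hf) (hπB z)
  rw [thetaPi_eq]
  linarith [abs_sub (f (x + z) - f x) (fderiv ℝ f x (π z)), abs_sub (f (x + z)) (f x),
    hfM (x + z), hfM x]

theorem abs_thetaPi_sub_thetaPi_le_mul_norm {Lf L : ℝ≥0} (hf : LipschitzWith Lf f)
    (hπ : LipschitzWith L π) (x z z' : EuclideanSpace ℝ (Fin d)) :
    |ThetaPi π f x z - ThetaPi π f x z'| ≤ Lf * (1 + L) * ‖z - z'‖ := by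
  have hincr : |f (x + z) - f (x + z')| ≤ Lf * ‖z - z'‖ := by
    simpa [Real.dist_eq, dist_eq_norm] using hf.dist_le_mul (x + z) (x + z')
  have hderiv : |fderiv ℝ f x (π z - π z')| ≤ Lf * (L * ‖z - z'‖) := by
    rw [← Real.norm_eq_abs]
    exact (fderiv ℝ f x).le_of_opNorm_le_of_le (norm_fderiv_le_of_lipschitz ℝ hf)
      (hπ.norm_sub_le z z')
  rw [thetaPi_sub_thetaPi]
  linarith [abs_sub (f (x + z) - f (x + z')) (fderiv ℝ f x (π z - π z'))]

theorem abs_thetaPi_sub_thetaPi_le_mul_min {Lf L : ℝ≥0} {M B : ℝ} (hf : LipschitzWith Lf f)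
    (hπ : LipschitzWith L π) (hfM : ∀ y, |f y| ≤ M) (hπB : ∀ z, ‖π z‖ ≤ B)
    (x z z' : EuclideanSpace ℝ (Fin d)) :
    |ThetaPi π f x z - ThetaPi π f x z'| ≤
      max ((Lf : ℝ) * (1 + L)) (2 * (2 * M + Lf * B)) * min ‖z - z'‖ 1 := by
  refine le_max_mul_min_one (norm_nonneg _) (abs_thetaPi_sub_thetaPi_le_mul_norm hf hπ x z z') ?_
  linarith [abs_sub (ThetaPi π f x z) (ThetaPi π f x z'), abs_thetaPi_le hf hfM hπB x z,
    abs_thetaPi_le hf hfM hπB x z']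

theorem abs_thetaPi_sub_thetaPi_le_of_norm_le {K : ℝ≥0} {ℓ : ℝ} (hf : Differentiable ℝ f)
    (hK : LipschitzWith K (fderiv ℝ f)) (hπ : ∀ z, ‖z‖ ≤ ℓ → π z = z)
    (x : EuclideanSpace ℝ (Fin d)) {z z' : EuclideanSpace ℝ (Fin d)} (hzz' : ‖z'‖ ≤ ‖z‖)
    (hz : ‖z‖ ≤ ℓ) :
    |ThetaPi π f x z - ThetaPi π f x z'| ≤ K * max 1 (2 * ℓ) * ‖z‖ * min ‖z - z'‖ 1 := by
  have hdiam : ‖z - z'‖ ≤ 2 * ℓ := by linarith [norm_sub_le z z']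
  rw [thetaPi_sub_thetaPi, hπ z hz, hπ z' (hzz'.trans hz), ← Real.norm_eq_abs]
  calc _ ≤ K * ‖z‖ * ‖z - z'‖ := norm_sub_sub_fderiv_le_of_lipschitzWith_fderiv hf hK x hzz'
    _ ≤ K * ‖z‖ * (max 1 (2 * ℓ) * min ‖z - z'‖ 1) := by
        gcongr
        exact le_max_mul_min_one (norm_nonneg _) (by rw [one_mul]) hdiam
    _ = _ := by ring

theorem thetaPi_eq_zero_of_norm_le_norm_sub {R : ℝ} (hR : R ≠ 0) (hf : ContDiff ℝ 1 f)
    (hsupp : ∀ x, R < ‖x‖ → f x = 0) {x z : EuclideanSpace ℝ (Fin d)} (hz : ‖z‖ ≤ ‖x‖ - R) :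
    ThetaPi π f x z = 0 := by
  have hx : R ≤ ‖x‖ := by linarith [norm_nonneg z]
  have hxz : R ≤ ‖x + z‖ := by
    have := norm_sub_le (x + z) z
    rw [add_sub_cancel_right] at this
    linarith
  have hderiv : fderiv ℝ f x = 0 :=
    eq_zero_of_le_norm (hf.continuous_fderiv one_ne_zero) hR
      (fun _ hy => fderiv_eq_zero_of_lt_norm hsupp hy) hx
  rw [thetaPi_eq, hderiv, eq_zero_of_le_norm hf.continuous hR hsupp hx,
    eq_zero_of_le_norm hf.continuous hR hsupp hxz]
  simp

theorem abs_thetaPi_sub_thetaPi_le_of_bounds {ℓ R C : ℝ} (hC : 0 ≤ C)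
    (hcoarse : ∀ x z z', |ThetaPi π f x z - ThetaPi π f x z'| ≤ C * min ‖z - z'‖ 1)
    (hfine : ∀ x {z z'}, ‖z'‖ ≤ ‖z‖ → ‖z‖ ≤ ℓ →
      |ThetaPi π f x z - ThetaPi π f x z'| ≤ C * ‖z‖ * min ‖z - z'‖ 1)
    (hdead : ∀ {x z}, ‖z‖ ≤ ‖x‖ - R → ThetaPi π f x z = 0)
    {x z z' : EuclideanSpace ℝ (Fin d)} (hzz' : ‖z'‖ ≤ ‖z‖) :
    |ThetaPi π f x z - ThetaPi π f x z'| ≤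
      C * min ‖z - z'‖ 1 *
        ((if ‖x‖ ≤ R + ℓ then 1 else 0) * (if ‖z‖ ≤ ℓ then ‖z‖ else 0)
          + (if max ℓ (‖x‖ - R) < ‖z‖ then 1 else 0)) := by
  by_cases hfar : max ℓ (‖x‖ - R) < ‖z‖
  · have hnear : 0 ≤ (if ‖x‖ ≤ R + ℓ then (1 : ℝ) else 0) * (if ‖z‖ ≤ ℓ then ‖z‖ else 0) := by
      positivity
    rw [if_pos hfar]
    calc _ ≤ C * min ‖z - z'‖ 1 * 1 := by rw [mul_one]; exact hcoarse x z z'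
      _ ≤ _ := by gcongr; linarith
  rw [if_neg hfar]
  by_cases hzx : ‖z‖ ≤ ‖x‖ - R
  · rw [hdead hzx, hdead (hzz'.trans hzx), sub_self, abs_zero]
    positivity
  have hz : ‖z‖ ≤ ℓ := (le_max_iff.1 (not_lt.1 hfar)).resolve_right hzx
  have hx : ‖x‖ ≤ R + ℓ := by linarith [not_le.1 hzx]
  rw [if_pos hx, if_pos hz]
  calc _ ≤ C * ‖z‖ * min ‖z - z'‖ 1 := hfine x hzz' hz
    _ = _ := by ring

end ThetaPi

theorem thetaPi_diff_bound_general {d : ℕ} (ℓ R : ℝ)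
    (hR : 0 < R)
    (f : EuclideanSpace ℝ (Fin d) → ℝ) (hf : ContDiff ℝ 2 f)
    (hsupp : ∀ x : EuclideanSpace ℝ (Fin d), R < ‖x‖ → f x = 0)
    (π : EuclideanSpace ℝ (Fin d) → EuclideanSpace ℝ (Fin d))
    (hπ_lip : ∃ L : NNReal, LipschitzWith L π)
    (hπ_id : ∀ z : EuclideanSpace ℝ (Fin d), ‖z‖ ≤ ℓ → π z = z)
    (hπ_zero : ∀ z : EuclideanSpace ℝ (Fin d), 2 * ℓ < ‖z‖ → π z = 0) :
    ∃ C : ℝ, 0 < C ∧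
      ∀ (x z z' : EuclideanSpace ℝ (Fin d)), ‖z'‖ ≤ ‖z‖ →
        |ThetaPi π f x z - ThetaPi π f x z'| ≤
          C * min ‖z - z'‖ 1 *
            ((if ‖x‖ ≤ R + ℓ then 1 else 0) * (if ‖z‖ ≤ ℓ then ‖z‖ else 0)
              + (if max ℓ (‖x‖ - R) < ‖z‖ then 1 else 0)) := by
  obtain ⟨L, hL⟩ := hπ_lip
  have hf_supp : HasCompactSupport f := hasCompactSupport_of_eq_zero_of_lt_norm hsupp
  obtain ⟨Lf, hLf⟩ := hf.lipschitzWith_of_hasCompactSupport hf_supp two_ne_zero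
  obtain ⟨K, hK⟩ := (hf.fderiv_right (m := 1) le_rfl).lipschitzWith_of_hasCompactSupport
    (hf_supp.fderiv ℝ) one_ne_zero
  obtain ⟨M, hM⟩ := hf_supp.exists_bound_of_continuous hf.continuous
  obtain ⟨B, hB⟩ :=
    (hasCompactSupport_of_eq_zero_of_lt_norm hπ_zero).exists_bound_of_continuous hL.continuous
  set C₀ : ℝ := max ((Lf : ℝ) * (1 + L)) (2 * (2 * M + Lf * B))
  set C₁ : ℝ := K * max 1 (2 * ℓ)
  have hC₀ : C₀ ≤ max (max C₀ C₁) 1 := le_max_of_le_left (le_max_left _ _)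
  have hC₁ : C₁ ≤ max (max C₀ C₁) 1 := le_max_of_le_left (le_max_right _ _)
  refine ⟨max (max C₀ C₁) 1, by positivity, fun x z z' hzz' => ?_⟩
  refine abs_thetaPi_sub_thetaPi_le_of_bounds (by positivity) (fun x z z' => ?_)
    (fun x z z' hzz' hz => ?_)
    (thetaPi_eq_zero_of_norm_le_norm_sub hR.ne' (hf.of_le one_le_two) hsupp) hzz'
  · exact (abs_thetaPi_sub_thetaPi_le_mul_min hLf hL hM hB x z z').trans (by gcongr)
  · exact (abs_thetaPi_sub_thetaPi_le_of_norm_le (hf.differentiable two_ne_zero) hK hπ_id x hzz'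
      hz).trans (by gcongr)

/-- Continuity estimate for `Θ^π_f`: there is `C > 0` (depending on `f`, `π`, `R`, `ℓ`)
such that for all `x` and `|z'| ≤ |z|`,
`|Θ^π_f(x;z) − Θ^π_f(x;z')| ≤ C (|z−z'| ∧ 1)(1_{|x|≤R+ℓ} 1_{|z|≤ℓ} |z| + 1_{|z|>max(ℓ,|x|−R)})`. -/
theorem thetaPi_diff_bound {d : ℕ} (ℓ R : ℝ) (hℓ : 0 < ℓ) (hℓ' : ℓ ≤ 1 / Real.sqrt 2)
    (hR : 0 < R)
    (f : EuclideanSpace ℝ (Fin d) → ℝ) (hf : ContDiff ℝ 2 f)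
    (hsupp : ∀ x : EuclideanSpace ℝ (Fin d), R < ‖x‖ → f x = 0)
    (π : EuclideanSpace ℝ (Fin d) → EuclideanSpace ℝ (Fin d))
    (hπ_lip : ∃ L : NNReal, LipschitzWith L π)
    (hπ_id : ∀ z : EuclideanSpace ℝ (Fin d), ‖z‖ ≤ ℓ → π z = z)
    (hπ_zero : ∀ z : EuclideanSpace ℝ (Fin d), 2 * ℓ < ‖z‖ → π z = 0) :
    ∃ C : ℝ, 0 < C ∧
      ∀ (x z z' : EuclideanSpace ℝ (Fin d)), ‖z'‖ ≤ ‖z‖ →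
        |ThetaPi π f x z - ThetaPi π f x z'| ≤
          C * min ‖z - z'‖ 1 *
            ((if ‖x‖ ≤ R + ℓ then 1 else 0) * (if ‖z‖ ≤ ℓ then ‖z‖ else 0)
              + (if max ℓ (‖x‖ - R) < ‖z‖ then 1 else 0)) :=
  thetaPi_diff_bound_general ℓ R hR f hf hsupp π hπ_lip hπ_id hπ_zero
end
end
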